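/- arXiv:2605.07843 — 6 statements merged into one kernel-verified Lean document; each statement's English description precedes it below -/
import Mathlib

section
/- Every locally compact Hausdorff quasi-topological group is a topological group; that is, if G is a group with a locally compact Hausdorff topology such that inversion g ↦ g⁻¹ is continuous and multiplication is continuous in each variable separately, then multiplication G × G → G is jointly continuous. -/
open Filter Set Topology

/-- Ellis's theorem: a locally compact Hausdorff quasi-topological group is a topological
group. If `G` is a group with a locally compact Hausdorff topology such that inversion is
continuous and multiplication is continuous in each variable separately, then multiplication
is jointly continuous. -/
theorem ellis_locallyCompact {G : Type*} [Group G] [TopologicalSpace G]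
    [LocallyCompactSpace G] [T2Space G]
    (hinv : Continuous fun g : G => g⁻¹)
    (hleft : ∀ h : G, Continuous fun g : G => h * g)
    (hright : ∀ h : G, Continuous fun g : G => g * h) :
    Continuous fun p : G × G => p.1 * p.2 := by
  -- continuity of `x ↦ x⁻¹ * t`
  have hqr : ∀ t : G, Continuous fun x : G => x⁻¹ * t := fun t => (hright t).comp hinv
  -- Key step: for every open `W ∋ 1` there is a nonempty open `V` with `V⁻¹ * V ⊆ W`.
  have key : ∀ W : Set G, IsOpen W → (1 : G) ∈ W →
      ∃ V : Set G, IsOpen V ∧ V.Nonempty ∧ ∀ a ∈ V, ∀ b ∈ V, a⁻¹ * b ∈ W := by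
    intro W hW hW1
    by_contra hcon
    push_neg at hcon
    -- two shrinkings of W with closures
    obtain ⟨K1, hK1c, hK1i, hK1sub⟩ := exists_compact_subset hW hW1
    set W₁ := interior K1 with hW₁def
    have hW₁o : IsOpen W₁ := isOpen_interior
    have hW₁1 : (1 : G) ∈ W₁ := hK1i
    have hclW₁ : closure W₁ ⊆ W :=
      (closure_minimal interior_subset hK1c.isClosed).trans hK1sub
    obtain ⟨K2, hK2c, hK2i, hK2sub⟩ := exists_compact_subset hW₁o hW₁1
    set W₂ := interior K2 with hW₂def
    have hW₂o : IsOpen W₂ := isOpen_interior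
    have hW₂1 : (1 : G) ∈ W₂ := hK2i
    have hclW₂ : closure W₂ ⊆ W₁ :=
      (closure_minimal interior_subset hK2c.isClosed).trans hK2sub
    obtain ⟨K, hKc, hKnhds⟩ := exists_compact_mem_nhds (1 : G)
    -- chooser for the failure of the conclusion
    have hfail : ∀ V : Set G, ∃ p : G × G,
        IsOpen V → V.Nonempty → p.1 ∈ V ∧ p.2 ∈ V ∧ p.1⁻¹ * p.2 ∉ W := by
      intro V
      by_cases hV : IsOpen V ∧ V.Nonempty
      · obtain ⟨a, ha, b, hb, hab⟩ := hcon V hV.1 hV.2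
        exact ⟨(a, b), fun _ _ => ⟨ha, hb, hab⟩⟩
      · exact ⟨(1, 1), fun h1 h2 => absurd ⟨h1, h2⟩ hV⟩
    choose F hF using hfail
    -- the recursive construction
    set step : Set G → Set G := fun D =>
      D ∩ {x | (F D).1⁻¹ * x ∈ W₂} ∩ {x | x⁻¹ * (F D).2 ∉ closure W₁} with hstepdef
    set D : ℕ → Set G := fun n => step^[n] (interior K) with hDdef
    have hD0 : D 0 = interior K := rfl
    have hDsucc : ∀ n, D (n + 1) = step (D n) := by
      intro n
      simp only [hDdef, Function.iterate_succ_apply']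
    have hinvar : ∀ n, IsOpen (D n) ∧ (D n).Nonempty := by
      intro n
      induction n with
      | zero =>
        exact ⟨isOpen_interior, ⟨1, mem_interior_iff_mem_nhds.2 hKnhds⟩⟩
      | succ n ih =>
        obtain ⟨ho, hne⟩ := ih
        obtain ⟨hs, ht, hst⟩ := hF (D n) ho hne
        constructor
        · rw [hDsucc]
          exact ((ho.inter (hW₂o.preimage (hleft _))).inter
            ((isClosed_closure.isOpen_compl).preimage (hqr _)))
        · refine ⟨(F (D n)).1, ?_⟩
          rw [hDsucc]
          refine ⟨⟨hs, ?_⟩, ?_⟩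
          · show (F (D n)).1⁻¹ * (F (D n)).1 ∈ W₂
            rw [inv_mul_cancel]; exact hW₂1
          · show (F (D n)).1⁻¹ * (F (D n)).2 ∉ closure W₁
            exact fun h => hst (hclW₁ h)
    set s : ℕ → G := fun n => (F (D n)).1 with hsdef
    set t : ℕ → G := fun n => (F (D n)).2 with htdef
    have hsD : ∀ n, s n ∈ D n := fun n => (hF (D n) (hinvar n).1 (hinvar n).2).1
    have htD : ∀ n, t n ∈ D n := fun n => (hF (D n) (hinvar n).1 (hinvar n).2).2.1
    have hDmono : ∀ n m, n ≤ m → D m ⊆ D n := by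
      intro n m h
      induction m with
      | zero => simp_all
      | succ m ih =>
        rcases Nat.lt_or_ge n (m + 1) with h' | h'
        · have : D (m + 1) ⊆ D m := by
            rw [hDsucc]; exact fun x hx => hx.1.1
          exact this.trans (ih (Nat.lt_succ_iff.mp h'))
        · have : n = m + 1 := le_antisymm h h'
          subst this; exact subset_rfl
    have hDsubK : ∀ n, D n ⊆ K := by
      intro n
      exact (hDmono 0 n (Nat.zero_le n)).trans (by rw [hD0]; exact interior_subset)
    -- cross relations
    have cross1 : ∀ n m, n < m → (s n)⁻¹ * t m ∈ W₂ := by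
      intro n m h
      have htm : t m ∈ D (n + 1) := hDmono (n + 1) m h (htD m)
      rw [hDsucc] at htm
      exact htm.1.2
    have cross2 : ∀ n m, n < m → (s m)⁻¹ * t n ∉ closure W₁ := by
      intro n m h
      have hsm : s m ∈ D (n + 1) := hDmono (n + 1) m h (hsD m)
      rw [hDsucc] at hsm
      exact hsm.2
    -- cluster points
    have hsmap : Filter.map s Filter.atTop ≤ 𝓟 K := by
      rw [le_principal_iff, mem_map]
      exact Filter.Eventually.of_forall fun n => hDsubK n (hsD n)
    have htmap : Filter.map t Filter.atTop ≤ 𝓟 K := by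
      rw [le_principal_iff, mem_map]
      exact Filter.Eventually.of_forall fun n => hDsubK n (htD n)
    obtain ⟨sx, _, hsx⟩ := hKc.exists_clusterPt hsmap
    obtain ⟨tx, _, htx⟩ := hKc.exists_clusterPt htmap
    -- cluster point helpers
    have clus_closed : ∀ {u : ℕ → G} {x : G}, ClusterPt x (Filter.map u Filter.atTop) →
        ∀ {C : Set G}, IsClosed C → ∀ N : ℕ, (∀ m, N < m → u m ∈ C) → x ∈ C := by
      intro u x hx C hC N hu
      have hle : Filter.map u Filter.atTop ≤ 𝓟 C := by
        rw [le_principal_iff, mem_map]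
        filter_upwards [eventually_gt_atTop N] with m hm using hu m hm
      have := hx.mono hle
      have hxc : x ∈ closure C := mem_closure_iff_clusterPt.2 this
      rwa [hC.closure_eq] at hxc
    have clus_open : ∀ {u : ℕ → G} {x : G}, ClusterPt x (Filter.map u Filter.atTop) →
        ∀ {S : Set G}, ∀ N : ℕ, (∀ m, N < m → u m ∈ S) → x ∈ closure S := by
      intro u x hx S N hu
      have hle : Filter.map u Filter.atTop ≤ 𝓟 S := by
        rw [le_principal_iff, mem_map]
        filter_upwards [eventually_gt_atTop N] with m hm using hu m hm
      exact mem_closure_iff_clusterPt.2 (hx.mono hle)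
    -- the contradiction
    have hA1 : ∀ n, (s n)⁻¹ * tx ∈ closure W₂ := by
      intro n
      have : tx ∈ {x : G | (s n)⁻¹ * x ∈ closure W₂} :=
        clus_closed htx (isClosed_closure.preimage (hleft ((s n)⁻¹))) n
          (fun m hm => subset_closure (cross1 n m hm))
      exact this
    have hA2 : sx⁻¹ * tx ∈ closure W₂ := by
      have : sx ∈ {x : G | x⁻¹ * tx ∈ closure W₂} :=
        clus_closed hsx (isClosed_closure.preimage (hqr tx)) 0 (fun m _ => hA1 m)
      exact this
    have hB1 : ∀ n, sx⁻¹ * t n ∉ W₁ := by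
      intro n
      have h1 : sx ∈ closure {x : G | x⁻¹ * t n ∉ closure W₁} :=
        clus_open hsx n (fun m hm => cross2 n m hm)
      have h2 : sx⁻¹ * t n ∈ closure ((closure W₁)ᶜ) := by
        have himg : (fun x : G => x⁻¹ * t n) '' closure {x : G | x⁻¹ * t n ∉ closure W₁}
            ⊆ closure ((fun x : G => x⁻¹ * t n) '' {x : G | x⁻¹ * t n ∉ closure W₁}) :=
          image_closure_subset_closure_image (hqr (t n))
        have hsub : (fun x : G => x⁻¹ * t n) '' {x : G | x⁻¹ * t n ∉ closure W₁}
            ⊆ (closure W₁)ᶜ := by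
          rintro _ ⟨x, hx, rfl⟩; exact hx
        exact (closure_mono hsub) (himg (mem_image_of_mem _ h1))
      intro hmem
      rcases mem_closure_iff.1 h2 W₁ hW₁o hmem with ⟨y, hy1, hy2⟩
      exact hy2 (subset_closure hy1)
    have hB2 : sx⁻¹ * tx ∉ W₁ := by
      have : tx ∈ {x : G | sx⁻¹ * x ∈ W₁ᶜ} :=
        clus_closed htx (hW₁o.isClosed_compl.preimage (hleft (sx⁻¹))) 0
          (fun m _ => hB1 m)
      exact this
    exact hB2 (hclW₂ hA2)
  -- From `key`, multiplication is "continuous at (1,1)":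
  have key2 : ∀ W : Set G, IsOpen W → (1 : G) ∈ W →
      ∃ U : Set G, IsOpen U ∧ (1 : G) ∈ U ∧ ∀ u ∈ U, ∀ v ∈ U, u * v ∈ W := by
    intro W hW h1
    obtain ⟨V, hVo, ⟨c, hc⟩, hV⟩ := key W hW h1
    refine ⟨{x : G | c * x ∈ V} ∩ {x : G | c * x⁻¹ ∈ V}, ?_, ⟨?_, ?_⟩, ?_⟩
    · exact (hVo.preimage (hleft c)).inter (hVo.preimage ((hleft c).comp hinv))
    · show c * 1 ∈ V; rwa [mul_one]
    · show c * (1 : G)⁻¹ ∈ V; rwa [inv_one, mul_one]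
    · intro u hu v hv
      have h1' : c * u⁻¹ ∈ V := hu.2
      have h2' : c * v ∈ V := hv.1
      have := hV (c * u⁻¹) h1' (c * v) h2'
      have heq : (c * u⁻¹)⁻¹ * (c * v) = u * v := by group
      rwa [heq] at this
  -- Globalize
  rw [continuous_iff_continuousAt]
  rintro ⟨x, y⟩
  intro O hO
  rw [Filter.mem_map]
  obtain ⟨O', hO'sub, hO'open, hxy⟩ := mem_nhds_iff.1 hO
  have hWopen : IsOpen ((fun g : G => x * g * y) ⁻¹' O') :=
    hO'open.preimage ((hright y).comp (hleft x))
  have hW1 : (1 : G) ∈ (fun g : G => x * g * y) ⁻¹' O' := by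
    show x * 1 * y ∈ O'
    rwa [mul_one]
  obtain ⟨U, hUo, hU1, hU⟩ := key2 _ hWopen hW1
  have hA : IsOpen {a : G | x⁻¹ * a ∈ U} := hUo.preimage (hleft x⁻¹)
  have hB : IsOpen {b : G | b * y⁻¹ ∈ U} := hUo.preimage (hright y⁻¹)
  have hAx : x ∈ {a : G | x⁻¹ * a ∈ U} := by
    show x⁻¹ * x ∈ U; rwa [inv_mul_cancel]
  have hBy : y ∈ {b : G | b * y⁻¹ ∈ U} := by
    show y * y⁻¹ ∈ U; rwa [mul_inv_cancel]
  have hprod : {a : G | x⁻¹ * a ∈ U} ×ˢ {b : G | b * y⁻¹ ∈ U} ⊆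
      (fun p : G × G => p.1 * p.2) ⁻¹' O := by
    rintro ⟨a, b⟩ ⟨ha, hb⟩
    have hmem := hU _ ha _ hb
    rw [Set.mem_preimage] at hmem
    have heq : x * (x⁻¹ * a * (b * y⁻¹)) * y = a * b := by group
    rw [heq] at hmem
    exact hO'sub hmem
  exact Filter.mem_of_superset
    (prod_mem_nhds (hA.mem_nhds hAx) (hB.mem_nhds hBy)) hprod
end

section
/- A group with a topology in which multiplication is continuous in each variable separately (i.e., all left and right translations are continuous) has the property that the map g ↦ g⁻¹ being continuous at the identity element implies it need not be continuous globally; however, if inversion is continuous everywhere and the topology is compact Hausdorff, then the group is a topological group. -/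
open Filter Topology Set

section Ellis

variable {G : Type*} [Group G] [TopologicalSpace G] [CompactSpace G]

/-- The pack of data carried along the recursive construction. -/
private def EPack (U₀ H₀ : Set G) : Type _ :=
  {q : Set G × Set G // IsOpen q.1 ∧ q.1.Nonempty ∧ q.1 ⊆ U₀ ∧
    IsOpen q.2 ∧ q.2.Nonempty ∧ q.2 ⊆ H₀}

/-- Core oscillation lemma: for separately continuous multiplication on a compact space,
any continuous real function `φ` and any nonempty open box `U₀ × H₀`, there is a
nonempty open sub-box on which `(x, k) ↦ φ (x * k)` oscillates by at most `ε`. -/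
private lemma ellis_diamond
    (hleft : ∀ h : G, Continuous fun g : G => h * g)
    (hright : ∀ h : G, Continuous fun g : G => g * h)
    (φ : G → ℝ) (hφ : Continuous φ) {ε : ℝ} (hε : 0 < ε)
    (U₀ H₀ : Set G) (hU₀ : IsOpen U₀) (hU₀n : U₀.Nonempty)
    (hH₀ : IsOpen H₀) (hH₀n : H₀.Nonempty) :
    ∃ U H : Set G, IsOpen U ∧ U.Nonempty ∧ U ⊆ U₀ ∧ IsOpen H ∧ H.Nonempty ∧ H ⊆ H₀ ∧
      ∀ x ∈ U, ∀ k ∈ H, ∀ x' ∈ U, ∀ k' ∈ H, |φ (x * k) - φ (x' * k')| ≤ ε := by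
  by_contra hcon
  push_neg at hcon
  -- one step of the construction
  have step : ∀ p : EPack U₀ H₀, ∃ (x κ : G) (r s : ℝ) (q : EPack U₀ H₀),
      x ∈ p.val.1 ∧ κ ∈ p.val.2 ∧ ε/2 ≤ |s - r| ∧ (∃ g, r = φ g) ∧ (∃ g, s = φ g) ∧
      q.val.1 ⊆ p.val.1 ∧ q.val.2 ⊆ p.val.2 ∧
      (∀ y ∈ q.val.1, |φ (y * κ) - r| ≤ ε/8) ∧
      (∀ k ∈ q.val.2, |φ (x * k) - s| ≤ ε/8) := by
    rintro ⟨⟨O, H⟩, hO, hOn, hOU, hH, hHn, hHH⟩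
    obtain ⟨x, hx, k, hk, x', hx', k', hk', hsep⟩ :=
      hcon O H hO hOn hOU hH hHn hHH
    by_cases hc : ε/2 < |φ (x * k) - φ (x' * k)|
    · -- two functions separated at the same point k
      refine ⟨x, k, φ (x' * k), φ (x * k),
        ⟨(O ∩ {y | |φ (y * k) - φ (x' * k)| < ε/8},
          H ∩ {κ' | |φ (x * κ') - φ (x * k)| < ε/8}), ?_⟩, hx, hk, le_of_lt hc,
        ⟨x' * k, rfl⟩, ⟨x * k, rfl⟩, inter_subset_left, inter_subset_left,
        ?_, ?_⟩
      · refine ⟨hO.inter (isOpen_lt (((hφ.comp (hright k)).sub continuous_const).abs)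
          continuous_const), ⟨x', hx', by simp [hε.le]; positivity⟩,
          inter_subset_left.trans hOU,
          hH.inter (isOpen_lt (((hφ.comp (hleft x)).sub continuous_const).abs)
          continuous_const), ⟨k, hk, by simp; positivity⟩,
          inter_subset_left.trans hHH⟩
      · exact fun y hy => le_of_lt hy.2
      · exact fun κ' hκ' => le_of_lt hκ'.2
    · -- one function separated at two points k, k'
      push_neg at hc
      have hsep' : ε/2 ≤ |φ (x' * k) - φ (x' * k')| := by
        have := abs_sub_le (φ (x * k)) (φ (x' * k)) (φ (x' * k'))
        have h2 := abs_sub_abs_le_abs_sub (φ (x * k)) (φ (x' * k))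
        linarith [abs_sub_le (φ (x * k)) (φ (x' * k)) (φ (x' * k'))]
      refine ⟨x', k', φ (x' * k'), φ (x' * k),
        ⟨(O ∩ {y | |φ (y * k') - φ (x' * k')| < ε/8},
          H ∩ {κ' | |φ (x' * κ') - φ (x' * k)| < ε/8}), ?_⟩, hx', hk', hsep',
        ⟨x' * k', rfl⟩, ⟨x' * k, rfl⟩, inter_subset_left, inter_subset_left,
        ?_, ?_⟩
      · refine ⟨hO.inter (isOpen_lt (((hφ.comp (hright k')).sub continuous_const).abs)
          continuous_const), ⟨x', hx', by simp; positivity⟩,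
          inter_subset_left.trans hOU,
          hH.inter (isOpen_lt (((hφ.comp (hleft x')).sub continuous_const).abs)
          continuous_const), ⟨k, hk, by simp; positivity⟩,
          inter_subset_left.trans hHH⟩
      · exact fun y hy => le_of_lt hy.2
      · exact fun κ' hκ' => le_of_lt hκ'.2
  choose Xf Kf Rf Sf Qf h₁ h₂ h₃ h₄ h₅ h₆ h₇ h₈ h₉ using step
  obtain ⟨u₀, hu₀⟩ := hU₀n
  obtain ⟨v₀, hv₀⟩ := hH₀n
  let p₀ : EPack U₀ H₀ := ⟨(U₀, H₀), hU₀, ⟨u₀, hu₀⟩, le_refl _, hH₀, ⟨v₀, hv₀⟩, le_refl _⟩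
  let F : ℕ → EPack U₀ H₀ := fun n => Nat.rec p₀ (fun _ q => Qf q) n
  have hFs : ∀ n, F (n+1) = Qf (F n) := fun n => rfl
  set xs : ℕ → G := fun n => Xf (F n) with hxs
  set ks : ℕ → G := fun n => Kf (F n) with hks
  set rs : ℕ → ℝ := fun n => Rf (F n) with hrs
  set ss : ℕ → ℝ := fun n => Sf (F n) with hss
  have hmono1 : ∀ m n, m ≤ n → (F n).val.1 ⊆ (F m).val.1 := by
    intro m n h
    induction h with
    | refl => exact le_refl _
    | step h ih => exact fun t ht => ih ((hFs _ ▸ h₆ _) ht)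
  have hmono2 : ∀ m n, m ≤ n → (F n).val.2 ⊆ (F m).val.2 := by
    intro m n h
    induction h with
    | refl => exact le_refl _
    | step h ih => exact fun t ht => ih ((hFs _ ▸ h₇ _) ht)
  -- cross-step estimates
  have fact_low : ∀ m n, m < n → |φ (xs n * ks m) - rs m| ≤ ε/8 := by
    intro m n hmn
    have hxmem : xs n ∈ (Qf (F m)).val.1 := by
      have := h₁ (F n)
      exact (hFs m ▸ hmono1 (m+1) n hmn) this
    exact h₈ (F m) _ hxmem
  have fact_high : ∀ m n, n < m → |φ (xs n * ks m) - ss n| ≤ ε/8 := by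
    intro m n hnm
    have hkmem : ks m ∈ (Qf (F n)).val.2 := by
      have := h₂ (F m)
      exact (hFs n ▸ hmono2 (n+1) m hnm) this
    exact h₉ (F n) _ hkmem
  -- ultrafilter limits
  let 𝒰 : Ultrafilter ℕ := hyperfilter ℕ
  have hcof : ∀ m : ℕ, ∀ᶠ n in (𝒰 : Filter ℕ), m < n := by
    intro m
    apply Filter.le_def.mp (hyperfilter_le_cofinite)
    rw [Nat.cofinite_eq_atTop]
    exact eventually_gt_atTop m
  obtain ⟨z, -, hz⟩ := isCompact_univ.ultrafilter_le_nhds (𝒰.map xs)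
    (le_principal_iff.mpr univ_mem)
  have hz' : Tendsto xs (𝒰 : Filter ℕ) (𝓝 z) := by
    rw [Tendsto, ← Ultrafilter.coe_map]; exact hz
  obtain ⟨kst, -, hk⟩ := isCompact_univ.ultrafilter_le_nhds (𝒰.map ks)
    (le_principal_iff.mpr univ_mem)
  have hk' : Tendsto ks (𝒰 : Filter ℕ) (𝓝 kst) := by
    rw [Tendsto, ← Ultrafilter.coe_map]; exact hk
  obtain ⟨rst, -, hr⟩ := (isCompact_range hφ).ultrafilter_le_nhds (𝒰.map rs)
    (le_principal_iff.mpr (Filter.mem_map.mpr (univ_mem' (fun n => by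
      obtain ⟨g, hg⟩ := h₄ (F n); exact ⟨g, hg.symm⟩))))
  have hr' : Tendsto rs (𝒰 : Filter ℕ) (𝓝 rst) := by
    rw [Tendsto, ← Ultrafilter.coe_map]; exact hr
  obtain ⟨sst, -, hs⟩ := (isCompact_range hφ).ultrafilter_le_nhds (𝒰.map ss)
    (le_principal_iff.mpr (Filter.mem_map.mpr (univ_mem' (fun n => by
      obtain ⟨g, hg⟩ := h₅ (F n); exact ⟨g, hg.symm⟩))))
  have hs' : Tendsto ss (𝒰 : Filter ℕ) (𝓝 sst) := by
    rw [Tendsto, ← Ultrafilter.coe_map]; exact hs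
  -- limit estimates
  have E1 : ∀ m, |φ (z * ks m) - rs m| ≤ ε/8 := by
    intro m
    have T1 : Tendsto (fun n => φ (xs n * ks m)) (𝒰 : Filter ℕ) (𝓝 (φ (z * ks m))) :=
      ((hφ.comp (hright (ks m))).tendsto z).comp hz'
    exact le_of_tendsto ((T1.sub tendsto_const_nhds).abs)
      ((hcof m).mono (fun n hn => fact_low m n hn))
  have E2 : |φ (z * kst) - rst| ≤ ε/8 := by
    have T : Tendsto (fun m => φ (z * ks m)) (𝒰 : Filter ℕ) (𝓝 (φ (z * kst))) :=
      ((hφ.comp (hleft z)).tendsto kst).comp hk'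
    exact le_of_tendsto ((T.sub hr').abs) (Eventually.of_forall E1)
  have E3 : ∀ n, |φ (xs n * kst) - ss n| ≤ ε/8 := by
    intro n
    have T : Tendsto (fun m => φ (xs n * ks m)) (𝒰 : Filter ℕ) (𝓝 (φ (xs n * kst))) :=
      ((hφ.comp (hleft (xs n))).tendsto kst).comp hk'
    exact le_of_tendsto ((T.sub tendsto_const_nhds).abs)
      ((hcof n).mono (fun m hm => fact_high m n hm))
  have E4 : |φ (z * kst) - sst| ≤ ε/8 := by
    have T : Tendsto (fun n => φ (xs n * kst)) (𝒰 : Filter ℕ) (𝓝 (φ (z * kst))) :=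
      ((hφ.comp (hright kst)).tendsto z).comp hz'
    exact le_of_tendsto ((T.sub hs').abs) (Eventually.of_forall E3)
  have E5 : ε/2 ≤ |sst - rst| := by
    refine ge_of_tendsto ((hs'.sub hr').abs) (Eventually.of_forall (fun n => h₃ (F n)))
  have : |sst - rst| ≤ ε/4 := by
    have h := abs_sub_le sst (φ (z * kst)) rst
    have h2 : |sst - φ (z * kst)| = |φ (z * kst) - sst| := abs_sub_comm _ _
    linarith
  linarith

/-- Finite-family version of the oscillation lemma. -/
private lemma ellis_diamond_list
    (hleft : ∀ h : G, Continuous fun g : G => h * g)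
    (hright : ∀ h : G, Continuous fun g : G => g * h)
    (l : List (G → ℝ)) (hl : ∀ φ ∈ l, Continuous φ) {ε : ℝ} (hε : 0 < ε) :
    ∃ U H : Set G, IsOpen U ∧ U.Nonempty ∧ IsOpen H ∧ H.Nonempty ∧
      ∀ φ ∈ l, ∀ x ∈ U, ∀ k ∈ H, ∀ x' ∈ U, ∀ k' ∈ H, |φ (x * k) - φ (x' * k')| ≤ ε := by
  induction l with
  | nil =>
    exact ⟨univ, univ, isOpen_univ, univ_nonempty, isOpen_univ, univ_nonempty,
      fun φ hφ => absurd hφ List.not_mem_nil⟩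
  | cons φ l ih =>
    obtain ⟨U, H, hU, hUn, hH, hHn, hsmall⟩ := ih (fun ψ hψ => hl ψ (List.mem_cons_of_mem _ hψ))
    obtain ⟨U', H', hU', hU'n, hU'sub, hH', hH'n, hH'sub, hsmall'⟩ :=
      ellis_diamond hleft hright φ (hl φ List.mem_cons_self) hε U H hU hUn hH hHn
    refine ⟨U', H', hU', hU'n, hH', hH'n, ?_⟩
    intro ψ hψ x hx k hk x' hx' k' hk'
    rcases List.mem_cons.mp hψ with h | h
    · subst h; exact hsmall' x hx k hk x' hx' k' hk'
    · exact hsmall ψ h x (hU'sub hx) k (hH'sub hk) x' (hU'sub hx') k' (hH'sub hk')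

/-- If an ultrafilter refines the image of `𝓝 1 ×ˢ 𝓝 1` under multiplication, then
its (compact Hausdorff) limit is `1`. -/
private lemma ellis_limit_one [T2Space G]
    (hleft : ∀ h : G, Continuous fun g : G => h * g)
    (hright : ∀ h : G, Continuous fun g : G => g * h)
    (𝒲 : Ultrafilter G)
    (hW : (𝒲 : Filter G) ≤ Filter.map (fun p : G × G => p.1 * p.2) (𝓝 1 ×ˢ 𝓝 1))
    {w : G} (hw : (𝒲 : Filter G) ≤ 𝓝 w) : w = 1 := by
  classical
  set Z : ({φ : G → ℝ // Continuous φ} × ℕ) → Set G :=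
    fun i => {b | |i.1.1 (w * b) - i.1.1 b| ≤ 1 / ((i.2 : ℝ) + 1)} with hZ
  have hZclosed : ∀ i, IsClosed (Z i) := by
    intro i
    have : Continuous fun b => |i.1.1 (w * b) - i.1.1 b| :=
      ((i.1.2.comp (hleft w)).sub i.1.2).abs
    exact isClosed_le this continuous_const
  have hFIP : ∀ u : Finset ({φ : G → ℝ // Continuous φ} × ℕ),
      ((univ : Set G) ∩ ⋂ i ∈ u, Z i).Nonempty := by
    intro u
    set N : ℕ := u.sup Prod.snd with hN
    have hεpos : (0:ℝ) < 1 / ((N : ℝ) + 1) := by positivity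
    set l : List (G → ℝ) := u.toList.map (fun i => i.1.1) with hll
    have hlcont : ∀ φ ∈ l, Continuous φ := by
      intro φ hφ
      obtain ⟨i, _, rfl⟩ := List.mem_map.mp hφ
      exact i.1.2
    obtain ⟨U, H, hU, ⟨x₀, hx₀⟩, hH, ⟨k₀, hk₀⟩, hsmall⟩ :=
      ellis_diamond_list hleft hright l hlcont hεpos
    -- transported box containing (1, x₀ * k₀)
    set U' : Set G := (fun y => y * x₀) ⁻¹' U with hU'
    set H' : Set G := (fun y => x₀⁻¹ * y) ⁻¹' H with hH'
    have hU'open : IsOpen U' := hU.preimage (hright x₀)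
    have hH'open : IsOpen H' := hH.preimage (hleft x₀⁻¹)
    have h1U' : (1 : G) ∈ U' := by simp [hU', hx₀]
    set b : G := x₀ * k₀ with hb
    have hbH' : b ∈ H' := by simp [hH', hb, inv_mul_cancel_left, hk₀]
    have hsmall' : ∀ φ ∈ l, ∀ x ∈ U', ∀ k ∈ H', ∀ x' ∈ U', ∀ k' ∈ H',
        |φ (x * k) - φ (x' * k')| ≤ 1 / ((N : ℝ) + 1) := by
      intro φ hφ x hx k hk x' hx' k' hk'
      have e1 : x * k = (x * x₀) * (x₀⁻¹ * k) := by group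
      have e2 : x' * k' = (x' * x₀) * (x₀⁻¹ * k') := by group
      rw [e1, e2]
      exact hsmall φ hφ _ hx _ hk _ hx' _ hk'
    refine ⟨b, mem_univ b, ?_⟩
    simp only [mem_iInter]
    intro i hi
    -- value bound at b for φ := i.1.1
    have hφl : i.1.1 ∈ l := by
      rw [hll]
      exact List.mem_map.mpr ⟨i, Finset.mem_toList.mpr hi, rfl⟩
    set φ := i.1.1 with hφdef
    set C : Set G := {y | |φ y - φ b| ≤ 1 / ((N : ℝ) + 1)} with hC
    have hCclosed : IsClosed C :=
      isClosed_le ((i.1.2.sub continuous_const).abs) continuous_const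
    have hev : ∀ᶠ g in (𝒲 : Filter G), g * b ∈ C := by
      apply Filter.le_def.mp hW
      rw [Filter.mem_map]
      have hmem : U' ×ˢ ((fun v => v * b) ⁻¹' H') ∈ 𝓝 (1 : G) ×ˢ 𝓝 (1 : G) := by
        refine prod_mem_prod (hU'open.mem_nhds h1U')
          ((hH'open.preimage (hright b)).mem_nhds ?_)
        simpa using hbH'
      refine Filter.mem_of_superset hmem ?_
      rintro ⟨g₁, g₂⟩ ⟨hg₁, hg₂⟩
      show |φ (g₁ * g₂ * b) - φ b| ≤ 1 / ((N : ℝ) + 1)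
      have e3 : g₁ * g₂ * b = g₁ * (g₂ * b) := by group
      have e4 : φ b = φ ((1 : G) * b) := by rw [one_mul]
      rw [e3, e4]
      exact hsmall' φ hφl _ hg₁ _ hg₂ _ h1U' _ hbH'
    have hten : Tendsto (fun g => g * b) (𝒲 : Filter G) (𝓝 (w * b)) :=
      ((hright b).tendsto w).comp hw
    have hwb : w * b ∈ C := hCclosed.mem_of_tendsto hten hev
    have hle : (1:ℝ) / ((N:ℝ) + 1) ≤ 1 / ((i.2 : ℝ) + 1) := by
      have : (i.2 : ℝ) ≤ (N : ℝ) := by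
        exact_mod_cast Finset.le_sup (f := Prod.snd) hi
      apply one_div_le_one_div_of_le (by positivity) (by linarith)
    exact le_trans hwb hle
  obtain ⟨b, -, hb⟩ := isCompact_univ.inter_iInter_nonempty Z hZclosed hFIP
  simp only [mem_iInter] at hb
  have hall : ∀ (φ : G → ℝ), Continuous φ → φ (w * b) = φ b := by
    intro φ hφ
    by_contra hne
    have hpos : 0 < |φ (w * b) - φ b| := by
      rcases abs_pos.mpr (sub_ne_zero.mpr hne) with h
      exact h
    obtain ⟨n, hn⟩ := exists_nat_one_div_lt hpos
    exact absurd (hb (⟨⟨φ, hφ⟩, n⟩)) (not_le.mpr hn)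
  have hwb : w * b = b := by
    by_contra hne
    obtain ⟨f, hf0, hf1, -⟩ := exists_continuous_zero_one_of_isClosed
      (isClosed_singleton (x := w * b)) (isClosed_singleton (x := b))
      (by simpa [Set.disjoint_singleton] using hne)
    have := hall f f.continuous
    rw [hf0 (mem_singleton _), hf1 (mem_singleton _)] at this
    exact zero_ne_one this
  have : w * b = 1 * b := by rw [one_mul]; exact hwb
  exact mul_right_cancel this

end Ellis

/-- Ellis's theorem specialized to compact Hausdorff spaces: if `G` is a group with a compact
Hausdorff topology such that all left and right translations are continuous and inversion is
continuous everywhere, then `G` is a topological group (multiplication is jointly continuous). -/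
theorem ellis_compact {G : Type*} [Group G] [TopologicalSpace G]
    [CompactSpace G] [T2Space G]
    (hinv : Continuous fun g : G => g⁻¹)
    (hleft : ∀ h : G, Continuous fun g : G => h * g)
    (hright : ∀ h : G, Continuous fun g : G => g * h) :
    IsTopologicalGroup G := by
  have key : Tendsto (fun p : G × G => p.1 * p.2) (𝓝 1 ×ˢ 𝓝 1) (𝓝 (1 : G)) := by
    by_contra hk
    rw [Tendsto] at hk
    set F : Filter G := Filter.map (fun p : G × G => p.1 * p.2) (𝓝 1 ×ˢ 𝓝 1) with hF
    obtain ⟨t, ht, htF⟩ := Filter.not_le.mp hk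
    set s : Set G := interior t with hs
    have hs1 : (1 : G) ∈ s := mem_interior_iff_mem_nhds.mpr ht
    have hsF : s ∉ F := fun h => htF (Filter.mem_of_superset h interior_subset)
    haveI hne : (F ⊓ 𝓟 sᶜ).NeBot := by
      refine inf_principal_neBot_iff.mpr (fun U hU => ?_)
      exact Set.inter_compl_nonempty_iff.mpr
        (fun hsub => hsF (Filter.mem_of_superset hU hsub))
    set 𝒲 : Ultrafilter G := Ultrafilter.of (F ⊓ 𝓟 sᶜ) with h𝒲
    have hW1 : (𝒲 : Filter G) ≤ F := (Ultrafilter.of_le _).trans inf_le_left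
    have hW2 : (𝒲 : Filter G) ≤ 𝓟 sᶜ := (Ultrafilter.of_le _).trans inf_le_right
    obtain ⟨w, -, hw⟩ := isCompact_univ.ultrafilter_le_nhds 𝒲 (le_principal_iff.mpr univ_mem)
    have hw1 : w = 1 := ellis_limit_one hleft hright 𝒲 hW1 hw
    have hwc : w ∈ sᶜ := by
      have hsc : sᶜ ∈ (𝒲 : Filter G) := le_principal_iff.mp hW2
      exact (isOpen_interior.isClosed_compl).mem_of_tendsto (hw : Tendsto id _ _) hsc
    rw [hw1] at hwc
    exact hwc hs1
  have hmul : Continuous fun p : G × G => p.1 * p.2 := by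
    rw [continuous_iff_continuousAt]
    rintro ⟨a, b⟩
    have ta : Tendsto (fun x : G => a⁻¹ * x) (𝓝 a) (𝓝 1) := by
      simpa using (hleft a⁻¹).tendsto a
    have tb : Tendsto (fun y : G => y * b⁻¹) (𝓝 b) (𝓝 1) := by
      simpa using (hright b⁻¹).tendsto b
    have h1 : Tendsto (fun p : G × G => (a⁻¹ * p.1, p.2 * b⁻¹)) (𝓝 (a, b))
        (𝓝 1 ×ˢ 𝓝 1) := by
      rw [nhds_prod_eq]
      exact (ta.comp tendsto_fst).prodMk (tb.comp tendsto_snd)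
    have h2 : Tendsto (fun p : G × G => (a⁻¹ * p.1) * (p.2 * b⁻¹)) (𝓝 (a, b)) (𝓝 1) :=
      key.comp h1
    have h3 : Tendsto (fun z : G => a * z * b) (𝓝 (1 : G)) (𝓝 (a * b)) := by
      simpa [Function.comp_def] using ((hright b).comp (hleft a)).tendsto (1 : G)
    have h4 : Tendsto (fun p : G × G => a * ((a⁻¹ * p.1) * (p.2 * b⁻¹)) * b)
        (𝓝 (a, b)) (𝓝 (a * b)) := h3.comp h2
    have heq : ∀ p : G × G, a * ((a⁻¹ * p.1) * (p.2 * b⁻¹)) * b = p.1 * p.2 := by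
      intro p; group
    exact (h4.congr heq : Tendsto _ (𝓝 (a, b)) (𝓝 (a * b)))
  exact { continuous_mul := hmul, continuous_inv := hinv }
end

section
/- Every extremally disconnected compact Hausdorff space is a projective object in the category of compact Hausdorff spaces: given a continuous surjection f : Y → Z between compact Hausdorff spaces and a continuous map g : X → Z from an extremally disconnected compact Hausdorff space X, there exists a continuous map h : X → Y with f ∘ h = g. -/
theorem extremallyDisconnected_projective_aux
    {X : Type u} {Y : Type v} {Z : Type w} [TopologicalSpace X] [CompactSpace X] [T2Space X]
    [ExtremallyDisconnected X]
    [TopologicalSpace Y] [CompactSpace Y] [T2Space Y]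
    [TopologicalSpace Z] [CompactSpace Z] [T2Space Z]
    (f : Y → Z) (hf : Continuous f) (hfsurj : Function.Surjective f)
    (g : X → Z) (hg : Continuous g) :
    ∃ h : X → Y, Continuous h ∧ f ∘ h = g := by
  let eX : X ≃ₜ ULift.{max u v w} X := Homeomorph.ulift.symm
  let eY : Y ≃ₜ ULift.{max u v w} Y := Homeomorph.ulift.symm
  let eZ : Z ≃ₜ ULift.{max u v w} Z := Homeomorph.ulift.symm
  haveI : ExtremallyDisconnected (ULift.{max u v w} X) := extremallyDisconnected_of_homeo eX
  have hproj : CompactT2.Projective (ULift.{max u v w} X) :=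
    CompactT2.ExtremallyDisconnected.projective
  have hf' : Continuous (eZ ∘ f ∘ eY.symm) := by continuity
  have hsurj' : Function.Surjective (eZ ∘ f ∘ eY.symm) :=
    eZ.surjective.comp (hfsurj.comp eY.symm.surjective)
  have hg' : Continuous (eZ ∘ g ∘ eX.symm) := by continuity
  obtain ⟨h, hh, hcomp⟩ := hproj hg' hf' hsurj'
  refine ⟨eY.symm ∘ h ∘ eX, by continuity, ?_⟩
  funext x
  have := congrFun hcomp (eX x)
  simp only [Function.comp_apply] at this
  have h2 := eZ.injective this
  simpa using h2

/-- Gleason's theorem: an extremally disconnected compact Hausdorff space `X` is projective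
in the category of compact Hausdorff spaces: every continuous map `g : X → Z` lifts through
any continuous surjection `f : Y → Z` of compact Hausdorff spaces. -/
theorem extremallyDisconnected_projective
    {X Y Z : Type*} [TopologicalSpace X] [CompactSpace X] [T2Space X]
    [ExtremallyDisconnected X]
    [TopologicalSpace Y] [CompactSpace Y] [T2Space Y]
    [TopologicalSpace Z] [CompactSpace Z] [T2Space Z]
    (f : Y → Z) (hf : Continuous f) (hfsurj : Function.Surjective f)
    (g : X → Z) (hg : Continuous g) :
    ∃ h : X → Y, Continuous h ∧ f ∘ h = g :=
  extremallyDisconnected_projective_aux f hf hfsurj g hg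
end

section
/- Let G be a condensed group (a finite-product-preserving functor from extremally disconnected profinite sets to groups, forgotten to sets giving a condensed set). Then the underlying set G(*) equipped with the quotient topology from all profinite sets mapping to G is a quasi-topological group: inversion and all translations by elements of G(*) are continuous. -/
universe u

open CategoryTheory Opposite Limits

instance : ExtremallyDisconnected PUnit.{u+1} := ⟨fun _ _ => isOpen_discrete _⟩

/-- The point, as an extremally disconnected profinite set. -/
noncomputable def Stonean.pt : Stonean.{u} := Stonean.of PUnit.{u+1}

/-- The morphism from the point into a Stonean space `S` picking out `s : S`. -/
noncomputable def Stonean.fromPt (S : Stonean.{u}) (s : S) : Stonean.pt ⟶ S :=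
  ConcreteCategory.ofHom ⟨fun _ => s, continuous_const⟩

/-- For a condensed group `G` (a finite-product-preserving functor from extremally
disconnected profinite sets to groups), the underlying topology on `G(*)`: the quotient
topology induced by all (extremally disconnected) profinite sets mapping to `G`, i.e. the
supremum over all `S` and all `x ∈ G(S)` of the topology coinduced by
`S → G(*), s ↦ G(s)(x)`. -/
noncomputable def underlyingTopology (G : Stonean.{u}ᵒᵖ ⥤ GrpCat.{u}) :
    TopologicalSpace (G.obj (op Stonean.pt)) :=
  ⨆ (S : Stonean.{u}) (x : G.obj (op S)),
    TopologicalSpace.coinduced (fun s : S => G.map (S.fromPt s).op x) inferInstance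

/-- The unique map from a Stonean space to the point. -/
noncomputable def Stonean.toPt (S : Stonean.{u}) : S ⟶ Stonean.pt :=
  ConcreteCategory.ofHom ⟨fun _ => PUnit.unit, continuous_const⟩

lemma Stonean.fromPt_toPt (S : Stonean.{u}) (s : S) :
    S.fromPt s ≫ S.toPt = 𝟙 Stonean.pt := rfl

lemma aux_continuous (G : Stonean.{u}ᵒᵖ ⥤ GrpCat.{u})
    (f : G.obj (op Stonean.pt) → G.obj (op Stonean.pt))
    (hf : ∀ (S : Stonean.{u}) (x : G.obj (op S)), ∃ y : G.obj (op S),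
      ∀ s : S, f (G.map (S.fromPt s).op x) = G.map (S.fromPt s).op y) :
    @Continuous _ _ (underlyingTopology G) (underlyingTopology G) f := by
  rw [underlyingTopology, continuous_iSup_dom]
  intro S
  rw [continuous_iSup_dom]
  intro x
  rw [continuous_coinduced_dom]
  obtain ⟨y, hy⟩ := hf S x
  have : (f ∘ fun s : S => G.map (S.fromPt s).op x) =
      fun s : S => G.map (S.fromPt s).op y := funext hy
  rw [this, continuous_iff_coinduced_le]
  exact le_iSup₂ (f := fun (S : Stonean.{u}) (x : G.obj (op S)) =>
    TopologicalSpace.coinduced (fun s : S => G.map (S.fromPt s).op x) inferInstance) S y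

lemma aux_functorial (G : Stonean.{u}ᵒᵖ ⥤ GrpCat.{u}) (S : Stonean.{u}) (s : S)
    (h : G.obj (op Stonean.pt)) :
    G.map (S.fromPt s).op (G.map S.toPt.op h) = h := by
  have : G.map S.toPt.op ≫ G.map (S.fromPt s).op = 𝟙 _ := by
    rw [← G.map_comp, ← op_comp, Stonean.fromPt_toPt, op_id, G.map_id]
  calc G.map (S.fromPt s).op (G.map S.toPt.op h)
      = (G.map S.toPt.op ≫ G.map (S.fromPt s).op) h := rfl
    _ = h := by rw [this]; rfl

/-- The underlying set `G(*)` of a condensed group `G`, equipped with the quotient topology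
from all profinite sets mapping to `G`, is a quasi-topological group: inversion and all
left and right translations are continuous. -/
theorem condensedGroup_underlying_quasiTopologicalGroup
    (G : Stonean.{u}ᵒᵖ ⥤ GrpCat.{u}) [PreservesFiniteProducts G] :
    letI : TopologicalSpace (G.obj (op Stonean.pt)) := underlyingTopology G
    Continuous (fun g : G.obj (op Stonean.pt) => g⁻¹) ∧
      (∀ h : G.obj (op Stonean.pt), Continuous fun g : G.obj (op Stonean.pt) => h * g) ∧
      (∀ h : G.obj (op Stonean.pt), Continuous fun g : G.obj (op Stonean.pt) => g * h) := by
  refine ⟨?_, ?_, ?_⟩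
  · exact aux_continuous G _ fun S x => ⟨x⁻¹, fun s => (map_inv _ x).symm⟩
  · intro h
    exact aux_continuous G _ fun S x => ⟨G.map S.toPt.op h * x, fun s => by
      rw [map_mul, aux_functorial]⟩
  · intro h
    exact aux_continuous G _ fun S x => ⟨x * G.map S.toPt.op h, fun s => by
      rw [map_mul, aux_functorial]⟩
end

section
/- The inclusion functor from topological groups into quasi-topological groups admits a left adjoint τ such that for every quasi-topological group G, the topological group τ(G) has the same underlying group and a coarser topology, and τ(G) = G whenever G is already a topological group. -/
universe u

/-- The inclusion of topological groups into quasi-topological groups admits a left adjoint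
`τ`: for every quasi-topological group `(G, t)` there is a topology `t'` on `G` which is
coarser than `t`, makes `G` a topological group, agrees with `t` when `(G, t)` is already a
topological group, and is universal: for every topological group `H`, a group homomorphism
`G →* H` is continuous for `t` if and only if it is continuous for `t'`. -/
theorem quasiTopologicalGroup_topologization
    (G : Type u) [Group G] (t : TopologicalSpace G)
    (hinv : @Continuous G G t t fun g : G => g⁻¹)
    (hleft : ∀ h : G, @Continuous G G t t fun g : G => h * g)
    (hright : ∀ h : G, @Continuous G G t t fun g : G => g * h) :
    ∃ t' : TopologicalSpace G,
      t ≤ t' ∧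
      @IsTopologicalGroup G t' _ ∧
      (@IsTopologicalGroup G t _ → t' = t) ∧
      ∀ (H : Type u) [Group H] (s : TopologicalSpace H), @IsTopologicalGroup H s _ →
        ∀ f : G →* H, (@Continuous G H t s f ↔ @Continuous G H t' s f) := by
  set S : Set (GroupTopology G) := {b | t ≤ b.toTopologicalSpace} with hS
  have hle : t ≤ (sInf S).toTopologicalSpace := by
    rw [GroupTopology.toTopologicalSpace_sInf]
    exact le_sInf (by rintro x ⟨b, hb, rfl⟩; exact hb)
  refine ⟨(sInf S).toTopologicalSpace, hle, (sInf S).toIsTopologicalGroup, ?_, ?_⟩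
  · intro ht
    refine le_antisymm ?_ hle
    exact sInf_le (s := S) (a := ⟨t, ht⟩) (show t ≤ t from le_rfl)
  · intro H _ s hs f
    constructor
    · intro hf
      letI : TopologicalSpace H := s
      haveI := hs
      have h1 : @IsTopologicalGroup G (TopologicalSpace.induced f s) _ :=
        topologicalGroup_induced f
      have hmem : (⟨TopologicalSpace.induced f s, h1⟩ : GroupTopology G) ∈ S :=
        (continuous_iff_le_induced (t₁ := t) (t₂ := s) (f := ⇑f)).1 hf
      have h2 : (sInf S).toTopologicalSpace ≤ TopologicalSpace.induced f s :=
        sInf_le (s := S) (a := ⟨TopologicalSpace.induced f s, h1⟩) hmem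
      exact (continuous_iff_le_induced (t₁ := (sInf S).toTopologicalSpace)
        (t₂ := s) (f := ⇑f)).2 h2
    · intro hf
      exact (continuous_iff_le_induced (t₁ := t) (t₂ := s) (f := ⇑f)).2
        (le_trans hle ((continuous_iff_le_induced
          (t₁ := (sInf S).toTopologicalSpace) (t₂ := s) (f := ⇑f)).1 hf))
end

section
/- If X and Y are compactly generated topological spaces, then any bijection between the sets of continuous maps C(S, X) → C(S, Y) natural in compact Hausdorff spaces S is induced by a unique homeomorphism X ≅ Y; more precisely, the functor sending a compactly generated space T to the presheaf S ↦ C(S, T) on compact Hausdorff spaces is fully faithful. -/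
universe u

/-- A topological space `T` is compactly generated: continuity of maps out of `T` can be
tested against continuous maps from compact Hausdorff spaces into `T`. -/
def IsCompactlyGeneratedSpace (T : Type u) [TopologicalSpace T] : Prop :=
  ∀ (Y : Type u) (tY : TopologicalSpace Y) (f : T → Y),
    Continuous f ↔
      ∀ (S : Type u) (tS : TopologicalSpace S), @CompactSpace S tS → @T2Space S tS →
        ∀ u : S → T, Continuous u → Continuous (f ∘ u)

/-- The functor sending a compactly generated space `T` to the presheaf `S ↦ C(S, T)` on
compact Hausdorff spaces is fully faithful: for compactly generated `X` and `Y`, every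
family of maps `Φ_S : C(S, X) → C(S, Y)`, natural in the compact Hausdorff space `S`, is
induced by precisely one continuous map `f : X → Y`. In particular a natural bijection
`C(S, X) ≅ C(S, Y)` comes from a unique homeomorphism. -/
theorem compactlyGenerated_presheaf_fullyFaithful
    (X Y : Type u) [TopologicalSpace X] [TopologicalSpace Y]
    (hX : IsCompactlyGeneratedSpace X) (hY : IsCompactlyGeneratedSpace Y)
    (Φ : ∀ (S : Type u) [TopologicalSpace S] [CompactSpace S] [T2Space S],
      C(S, X) → C(S, Y))
    (nat : ∀ (S S' : Type u) [TopologicalSpace S] [CompactSpace S] [T2Space S]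
      [TopologicalSpace S'] [CompactSpace S'] [T2Space S'] (v : C(S', S)) (u : C(S, X)),
        Φ S' (u.comp v) = (Φ S u).comp v) :
    ∃! f : C(X, Y), ∀ (S : Type u) [TopologicalSpace S] [CompactSpace S] [T2Space S]
      (u : C(S, X)), Φ S u = f.comp u := by
  -- the underlying function, defined by evaluating Φ at the one-point space
  set f₀ : X → Y := fun x => Φ PUnit.{u+1} (ContinuousMap.const _ x) PUnit.unit with hf₀
  -- key pointwise identity from naturality
  have key : ∀ (S : Type u) [TopologicalSpace S] [CompactSpace S] [T2Space S]
      (u : C(S, X)) (s : S), Φ S u s = f₀ (u s) := by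
    intro S _ _ _ u s
    have h := nat S PUnit.{u+1} (ContinuousMap.const _ s) u
    have h' : u.comp (ContinuousMap.const _ s) = ContinuousMap.const PUnit.{u+1} (u s) := by
      ext; rfl
    rw [h'] at h
    have := congrArg (fun g => g PUnit.unit) h
    simpa [hf₀] using this.symm
  -- continuity of f₀ via compact generation of X
  have hcont : Continuous f₀ := by
    refine (hX Y _ f₀).2 ?_
    intro S tS hcS ht2S u hu
    have : f₀ ∘ u = ⇑(Φ S ⟨u, hu⟩) := by
      funext s
      exact (key S ⟨u, hu⟩ s).symm
    rw [this]
    exact (Φ S ⟨u, hu⟩).continuous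
  refine ⟨⟨f₀, hcont⟩, ?_, ?_⟩
  · intro S _ _ _ u
    ext s
    exact key S u s
  · intro g hg
    ext x
    have := congrArg (fun h => h PUnit.unit) (hg PUnit.{u+1} (ContinuousMap.const _ x))
    simpa [hf₀] using this.symm
end
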